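/- arXiv:2305.02736 — 4 statements merged into one kernel-verified Lean document; each statement's English description precedes it below -/
import Mathlib

section
/- Let U be a ULTS over a finite alphabet Σ. Then L(U) = ∅ if and only if there exists an inductive invariant for U. -/
/-- A labeled transition system whose states carry a compatible quasi order
(an upward-compatible LTS, ULTS): the final states are upward closed and the
quasi order is a simulation relation. -/
structure ULTS (A : Type) : Type 1 where
  S : Type
  le : S → S → Prop
  le_refl : ∀ s, le s s
  le_trans : ∀ ⦃s t u⦄, le s t → le t u → le s u
  init : Set S
  tr : S → A → Set S
  final : Set S
  final_up : ∀ ⦃s t⦄, s ∈ final → le s t → t ∈ final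
  sim : ∀ ⦃s t⦄ (a : A) ⦃s'⦄, le s t → s' ∈ tr s a → ∃ t', t' ∈ tr t a ∧ le s' t'

namespace ULTS

variable {A : Type}

/-- One-step successors of a set of states. -/
def stepSet (U : ULTS A) (P : Set U.S) (a : A) : Set U.S := ⋃ s ∈ P, U.tr s a

/-- States reachable from `P` by reading a word. -/
def reachSet (U : ULTS A) (P : Set U.S) : List A → Set U.S
  | [] => P
  | a :: w => U.reachSet (U.stepSet P a) w

/-- The language of a ULTS: words that can reach a final state from an initial state. -/
def lang (U : ULTS A) : Set (List A) := {w | (U.reachSet U.init w ∩ U.final).Nonempty}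

/-- The quasi order of the ULTS is a well quasi order; a ULTS with this property
is a (upward-compatible) WSTS. -/
def IsWQO (U : ULTS A) : Prop := ∀ f : ℕ → U.S, ∃ i j, i < j ∧ U.le (f i) (f j)

/-- A ULTS is deterministic if the set of initial states and every transition image
are singletons. -/
def Deterministic (U : ULTS A) : Prop :=
  (∃ s, U.init = {s}) ∧ ∀ s a, ∃ t, U.tr s a = {t}

end ULTS

/-- A language is regular if it is accepted by a deterministic finite automaton
with finitely many states. -/
def IsRegularLang {A : Type} (L : Set (List A)) : Prop :=
  ∃ (Q : Type) (_ : Fintype Q) (M : DFA A Q), M.accepts = L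

/-- Two languages are regularly separable if some regular language contains the
first and is disjoint from the second. -/
def RegSep {A : Type} (L1 L2 : Set (List A)) : Prop :=
  ∃ R : Set (List A), IsRegularLang R ∧ L1 ⊆ R ∧ R ∩ L2 = ∅


namespace ULTS

variable {A : Type}

/-- A set of states is downward closed. -/
def DownClosed (U : ULTS A) (X : Set U.S) : Prop :=
  ∀ ⦃s t⦄, U.le s t → t ∈ X → s ∈ X

/-- An inductive invariant: a downward-closed set of states containing the initial
states, disjoint from the final states, and closed under the transition relation. -/
def InductiveInvariant (U : ULTS A) (X : Set U.S) : Prop :=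
  U.DownClosed X ∧ U.init ⊆ X ∧ U.final ∩ X = ∅ ∧ ∀ a, U.stepSet X a ⊆ X

end ULTS

/-! Every invariant contains all reachable states, so it separates them from the final states.
Conversely, if no final state is reachable, the downward closure of the reachable states is an
invariant: the simulation property makes it closed under steps, and since the final states are
upward closed it still misses them. -/

namespace ULTS

variable {A : Type} (U : ULTS A)

theorem stepSet_mono {P Q : Set U.S} (h : P ⊆ Q) (a : A) : U.stepSet P a ⊆ U.stepSet Q a :=
  Set.biUnion_subset_biUnion_left h

theorem reachSet_append (P : Set U.S) (v w : List A) :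
    U.reachSet P (v ++ w) = U.reachSet (U.reachSet P v) w := by
  induction v generalizing P with
  | nil => rfl
  | cons a v ih => exact ih _

theorem reachSet_subset_of_stepSet_subset {X : Set U.S} (hX : ∀ a, U.stepSet X a ⊆ X) :
    ∀ {P : Set U.S}, P ⊆ X → ∀ w, U.reachSet P w ⊆ X
  | _, hP, [] => hP
  | _, hP, a :: w => reachSet_subset_of_stepSet_subset hX ((U.stepSet_mono hP a).trans (hX a)) w

def reachable : Set U.S := ⋃ w, U.reachSet U.init w

theorem init_subset_reachable : U.init ⊆ U.reachable :=
  Set.subset_iUnion (U.reachSet U.init) []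

theorem stepSet_reachable_subset (a : A) : U.stepSet U.reachable a ⊆ U.reachable := by
  intro t ht
  simp only [stepSet, reachable, Set.mem_iUnion] at ht
  obtain ⟨s, ⟨w, hs⟩, hst⟩ := ht
  refine Set.mem_iUnion.2 ⟨w ++ [a], ?_⟩
  rw [reachSet_append]
  exact Set.mem_biUnion hs hst

theorem reachable_subset {X : Set U.S} (hinit : U.init ⊆ X) (hX : ∀ a, U.stepSet X a ⊆ X) :
    U.reachable ⊆ X :=
  Set.iUnion_subset (U.reachSet_subset_of_stepSet_subset hX hinit)

theorem lang_eq_empty_iff : U.lang = ∅ ↔ U.final ∩ U.reachable = ∅ := by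
  rw [Set.inter_comm, reachable, Set.iUnion_inter, Set.iUnion_eq_empty,
    Set.eq_empty_iff_forall_notMem]
  exact forall_congr' fun _ => Set.not_nonempty_iff_eq_empty

def downClosure (X : Set U.S) : Set U.S := {s | ∃ t ∈ X, U.le s t}

theorem subset_downClosure (X : Set U.S) : X ⊆ U.downClosure X :=
  fun s hs => ⟨s, hs, U.le_refl s⟩

theorem downClosure_mono {X Y : Set U.S} (h : X ⊆ Y) : U.downClosure X ⊆ U.downClosure Y :=
  fun _ ⟨t, ht, hst⟩ => ⟨t, h ht, hst⟩

theorem downClosed_downClosure (X : Set U.S) : U.DownClosed (U.downClosure X) :=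
  fun _ _ hst ⟨u, hu, htu⟩ => ⟨u, hu, U.le_trans hst htu⟩

theorem stepSet_downClosure_subset (X : Set U.S) (a : A) :
    U.stepSet (U.downClosure X) a ⊆ U.downClosure (U.stepSet X a) := by
  intro s' hs'
  simp only [stepSet, Set.mem_iUnion] at hs'
  obtain ⟨s, ⟨t, ht, hst⟩, hss'⟩ := hs'
  obtain ⟨t', htt', hs't'⟩ := U.sim a hst hss'
  exact ⟨t', Set.mem_biUnion ht htt', hs't'⟩

theorem final_inter_downClosure_eq_empty {X : Set U.S} :
    U.final ∩ U.downClosure X = ∅ ↔ U.final ∩ X = ∅ := by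
  simp only [Set.eq_empty_iff_forall_notMem, Set.mem_inter_iff, not_and]
  refine ⟨fun h s hs hX => h s hs (U.subset_downClosure X hX), ?_⟩
  rintro h s hs ⟨t, ht, hst⟩
  exact h t (U.final_up hs hst) ht

theorem inductiveInvariant_downClosure_reachable (h : U.final ∩ U.reachable = ∅) :
    U.InductiveInvariant (U.downClosure U.reachable) :=
  ⟨U.downClosed_downClosure _,
    U.init_subset_reachable.trans (U.subset_downClosure _),
    U.final_inter_downClosure_eq_empty.2 h,
    fun a => (U.stepSet_downClosure_subset _ a).trans
      (U.downClosure_mono (U.stepSet_reachable_subset a))⟩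

end ULTS

theorem lang_empty_iff_inductiveInvariant_general {A : Type} (U : ULTS A) :
    U.lang = ∅ ↔ ∃ X : Set U.S, U.InductiveInvariant X := by
  rw [U.lang_eq_empty_iff]
  refine ⟨fun h => ⟨_, U.inductiveInvariant_downClosure_reachable h⟩, ?_⟩
  rintro ⟨X, -, hinit, hfinal, hstep⟩
  exact Set.subset_eq_empty (Set.inter_subset_inter_right _ (U.reachable_subset hinit hstep)) hfinal

/-- A ULTS has an empty language iff it admits an inductive
invariant. -/
theorem lang_empty_iff_inductiveInvariant {A : Type} [Finite A] (U : ULTS A) :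
    U.lang = ∅ ↔ ∃ X : Set U.S, U.InductiveInvariant X :=
  lang_empty_iff_inductiveInvariant_general U
end

section
/- Let (S, ≤) be a converging lattice and let X ⊆ S be downward closed. Then X ⊆ cl(X), cl(cl(X)) = cl(X), and cl(X) is downward closed, i.e., ↓cl(X) = cl(X). -/
/-- A sequence in a complete lattice converges if
`⨆ i, ⨅ j ≥ i, s j = ⨆ i, s i`. -/
def Converges {S : Type*} [CompleteLattice S] (s : ℕ → S) : Prop :=
  (⨆ i, ⨅ j, ⨅ (_ : i ≤ j), s j) = ⨆ i, s i

/-- A completely distributive lattice is converging if every sequence has a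
converging subsequence. -/
def ConvergingLattice (S : Type*) [CompletelyDistribLattice S] : Prop :=
  ∀ s : ℕ → S, ∃ φ : ℕ → ℕ, StrictMono φ ∧ Converges (s ∘ φ)

/-- The closure of a set: all joins of converging sequences inside the set. -/
def limClosure {S : Type*} [CompleteLattice S] (X : Set S) : Set S :=
  {x | ∃ s : ℕ → S, (∀ i, s i ∈ X) ∧ Converges s ∧ x = ⨆ i, s i}

/-- A set is closed if it contains the joins of all its converging sequences. -/
def SeqClosed {S : Type*} [CompleteLattice S] (G : Set S) : Prop :=
  ∀ s : ℕ → S, (∀ i, s i ∈ G) → Converges s → (⨆ i, s i) ∈ G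

/-!
Tail infima turn a converging sequence in `limClosure X` into an increasing one `t`, and each
`t i` is the join of an increasing row `m i` in `X`; it suffices to find a diagonal `J : ℕ → ℕ`
with `⨆ i, t i ≤ ⨆ K, ⨅ l ≥ K, m l (J l)`. By complete distributivity, `⨆ i, t i` is the join of
the elements `y` with `y ≪ z ≪ m i j` for some `z`, `i`, `j` (`≪` totally below). Such a `z`
lies below some entry of every row from `i` on, so countably many such `z` are captured by one
diagonal.
It remains to dominate all `y` by countably many `z`: the converging property says that every
sequence of pairs `y k ≪ z k` has `y k ≤ z l` for some `k < l`, and an argument along `ω₁`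
(an escape sequence, an uncountable thinning, and stabilisation of unions in the countable set
`ℕ × ℕ` of matrix positions) turns this into a countable dominating family.
-/

open Set Filter Cardinal Ordinal

universe u

section CompleteLattice
variable {S : Type*} [CompleteLattice S]

def tailInf (s : ℕ → S) (i : ℕ) : S := ⨅ j, ⨅ (_ : i ≤ j), s j

theorem tailInf_le (s : ℕ → S) {i j : ℕ} (h : i ≤ j) : tailInf s i ≤ s j :=
  iInf₂_le j h

theorem monotone_tailInf (s : ℕ → S) : Monotone (tailInf s) :=
  fun _ _ hij => le_iInf₂ fun _ hk => tailInf_le s (hij.trans hk)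

theorem tailInf_inf (s : ℕ → S) (y : S) (i : ℕ) :
    tailInf (fun j => s j ⊓ y) i = tailInf s i ⊓ y :=
  le_antisymm
    (le_inf (le_iInf₂ fun _ hj => (tailInf_le _ hj).trans inf_le_left)
      ((tailInf_le _ le_rfl).trans inf_le_right))
    (le_iInf₂ fun _ hj => inf_le_inf_right y (tailInf_le s hj))

theorem Monotone.tailInf_eq {s : ℕ → S} (hs : Monotone s) : tailInf s = s :=
  funext fun _ => (tailInf_le s le_rfl).antisymm (le_iInf₂ fun _ hj => hs hj)

theorem Monotone.converges {s : ℕ → S} (hs : Monotone s) : Converges s :=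
  congrArg iSup hs.tailInf_eq

theorem Monotone.iSup_mem_limClosure {X : Set S} {s : ℕ → S} (hs : Monotone s)
    (hsX : ∀ i, s i ∈ X) : ⨆ i, s i ∈ limClosure X :=
  ⟨s, hsX, hs.converges, rfl⟩

theorem subset_limClosure (X : Set S) : X ⊆ limClosure X :=
  fun x hx => by simpa only [iSup_const] using
    Monotone.iSup_mem_limClosure (s := fun _ : ℕ => x) monotone_const fun _ => hx

theorem SeqClosed.limClosure_eq {G : Set S} (hG : SeqClosed G) : limClosure G = G :=
  (subset_limClosure G).antisymm' fun _ ⟨s, hs, hc, hx⟩ => hx ▸ hG s hs hc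

theorem exists_monotone_iSup_eq_of_mem_limClosure {X : Set S} (hX : IsLowerSet X) {x : S}
    (hx : x ∈ limClosure X) : ∃ m : ℕ → S, Monotone m ∧ (∀ j, m j ∈ X) ∧ ⨆ j, m j = x := by
  obtain ⟨σ, hσX, hσ, rfl⟩ := hx
  exact ⟨tailInf σ, monotone_tailInf σ, fun j => hX (tailInf_le σ le_rfl) (hσX j), hσ⟩

end CompleteLattice

theorem IsLowerSet.limClosure {S : Type*} [Order.Frame S] {X : Set S} (hX : IsLowerSet X) :
    IsLowerSet (limClosure X) := by
  rintro _ y hyx ⟨s, hsX, hs, rfl⟩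
  have hinf : ∀ t : ℕ → S, ⨆ i, t i ⊓ y = y ⊓ ⨆ i, t i := fun t => by
    rw [← iSup_inf_eq, inf_comm]
  refine ⟨fun j => s j ⊓ y, fun j => hX inf_le_left (hsX j), ?_, ?_⟩
  · show ⨆ i, tailInf (fun j => s j ⊓ y) i = _
    simp only [tailInf_inf, hinf]
    exact congrArg (y ⊓ ·) hs
  · rw [hinf, inf_eq_left.2 hyx]

section TotallyBelow
variable {S : Type*}

def TotallyBelow [CompleteLattice S] (y x : S) : Prop :=
  ∀ A : Set S, x ≤ sSup A → ∃ a ∈ A, y ≤ a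

theorem TotallyBelow.exists_le_of_le_iSup [CompleteLattice S] {y x : S} (h : TotallyBelow y x)
    {f : ℕ → S} (hx : x ≤ ⨆ k, f k) : ∃ k, y ≤ f k := by
  obtain ⟨_, ⟨k, rfl⟩, hk⟩ := h (range f) (by rwa [sSup_range])
  exact ⟨k, hk⟩

variable [CompletelyDistribLattice S]

theorem le_sSup_totallyBelow (x : S) : x ≤ sSup {y | TotallyBelow y x} := by
  have hx : x ≤ ⨅ A : {A : Set S // x ≤ sSup A}, ⨆ a : A.1, (a : S) :=
    le_iInf fun A => sSup_eq_iSup' A.1 ▸ A.2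
  rw [iInf_iSup_eq] at hx
  refine hx.trans (iSup_le fun g => le_sSup fun B hB => ?_)
  exact ⟨g ⟨B, hB⟩, (g ⟨B, hB⟩).2, iInf_le (fun A => (g A : S)) ⟨B, hB⟩⟩

theorem le_sSup_totallyBelow_totallyBelow (x : S) :
    x ≤ sSup {y | ∃ z, TotallyBelow y z ∧ TotallyBelow z x} :=
  (le_sSup_totallyBelow x).trans <| sSup_le fun z hz =>
    (le_sSup_totallyBelow z).trans <| sSup_le_sSup fun _ hy => ⟨z, hy, hz⟩

theorem ConvergingLattice.exists_lt_le_of_totallyBelow (hconv : ConvergingLattice S)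
    (y z : ℕ → S) (hyz : ∀ k, TotallyBelow (y k) (z k)) : ∃ k l, k < l ∧ y k ≤ z l := by
  obtain ⟨φ, hφ, hc⟩ := hconv z
  obtain ⟨K, hK⟩ := (hyz (φ 0)).exists_le_of_le_iSup (f := tailInf (z ∘ φ))
    (hc.symm ▸ le_iSup (z ∘ φ) 0)
  exact ⟨φ 0, φ (K + 1), hφ K.succ_pos, hK.trans (tailInf_le (z ∘ φ) K.le_succ)⟩

end TotallyBelow

theorem Ordinal.countable_Iio_of_lt_omega_one {o : Ordinal.{u}} (ho : o < ω₁) :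
    (Iio o).Countable := by
  rw [← le_aleph0_iff_set_countable, Cardinal.mk_Iio_ordinal, lift_le_aleph0,
    ← Order.lt_succ_iff, succ_aleph0, ← lt_omega_iff_card_lt]
  exact ho

theorem Ordinal.countable_Iic_of_lt_omega_one {o : Ordinal.{u}} (ho : o < ω₁) :
    (Iic o).Countable := by
  rw [← Order.Iio_succ]
  exact countable_Iio_of_lt_omega_one ((isSuccLimit_omega 1).succ_lt ho)

theorem Ordinal.not_countable_Iio_omega_one : ¬(Iio ω₁ : Set Ordinal.{u}).Countable := by
  rw [← le_aleph0_iff_set_countable, Cardinal.mk_Iio_ordinal, lift_le_aleph0, card_omega,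
    not_le]
  exact aleph0_lt_aleph_one

theorem exists_omega_one_seq_forall_not_rel {P : Type*} (r : P → P → Prop)
    (h : ∀ Q : Set P, Q.Countable → ∃ p, ∀ q ∈ Q, ¬r p q) :
    ∃ F : Ordinal.{u} → P, ∀ ⦃β α⦄, β < α → α < ω₁ → ¬r (F α) (F β) := by
  have h' : ∀ Q : Set P, ∃ p, Q.Countable → ∀ q ∈ Q, ¬r p q := fun Q => by
    by_cases hQ : Q.Countable
    · exact (h Q hQ).imp fun p hp _ => hp
    · exact (h ∅ countable_empty).imp fun _ _ hQ' => (hQ hQ').elim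
  choose esc hesc using h'
  let F : Ordinal.{u} → P := Ordinal.lt_wf.fix fun α IH => esc (range fun β : Iio α => IH β β.2)
  have hF : ∀ α, F α = esc (range fun β : Iio α => F β) := Ordinal.lt_wf.fix_eq _
  refine ⟨F, fun β α hβα hα => ?_⟩
  have : Countable (Iio α) := (countable_Iio_of_lt_omega_one hα).to_subtype
  rw [hF α]
  exact hesc _ (countable_range _) _ ⟨⟨β, hβα⟩, rfl⟩

theorem exists_not_countable_subset_forall_countable_not_rel {α : Type*} (R : α → α → Prop)
    {U : Set α} (hU : ¬U.Countable)
    (hR : ∀ a : ℕ → α, (∀ n, a n ∈ U) → ∃ k l, k < l ∧ R (a k) (a l)) :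
    ∃ A ⊆ U, ¬A.Countable ∧ ∀ a ∈ A, {b ∈ A | ¬R a b}.Countable := by
  by_contra! H
  let T := {A : Set α // A ⊆ U ∧ ¬A.Countable}
  choose pt hpt using fun A : T => H A.1 A.2.1 A.2.2
  let next : T → T := fun A => ⟨{b ∈ A.1 | ¬R (pt A) b}, fun _ hb => A.2.1 hb.1, (hpt A).2⟩
  let A : ℕ → T := fun n => next^[n] ⟨U, subset_rfl, hU⟩
  have hA : ∀ n, (A (n + 1)).1 = {b ∈ (A n).1 | ¬R (pt (A n)) b} := fun n =>
    congrArg Subtype.val (Function.iterate_succ_apply' next n _)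
  have hanti : Antitone fun n => (A n).1 := antitone_nat_of_succ_le fun n => by
    rw [hA n]
    exact sep_subset _ _
  obtain ⟨k, l, hkl, hRkl⟩ := hR (fun n => pt (A n)) fun n => (A n).2.1 (hpt (A n)).1
  have hmem : pt (A l) ∈ (A (k + 1)).1 := hanti hkl (hpt (A l)).1
  rw [hA k] at hmem
  exact hmem.2 hRkl

theorem exists_countable_subset_forall_subset_biUnion {ι κ : Type*} [Countable κ]
    (f : ι → Set κ) (A : Set ι) : ∃ C ⊆ A, C.Countable ∧ ∀ a ∈ A, f a ⊆ ⋃ c ∈ C, f c := by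
  have hwit : ∀ x : ⋃ a ∈ A, f a, ∃ a ∈ A, x.1 ∈ f a := fun x =>
    (mem_iUnion₂.1 x.2).imp fun _ ⟨ha, hx⟩ => ⟨ha, hx⟩
  choose c hcA hc using hwit
  refine ⟨range c, range_subset_iff.2 hcA, countable_range c, fun a ha x hx => ?_⟩
  exact mem_biUnion (mem_range_self ⟨x, mem_biUnion ha hx⟩) (hc _)

/- If not, an `ω₁`-sequence `F` escapes domination by its predecessors. On an uncountable `A`
where each `g (F γ)` fails to lie in `h (F β)` for only countably many `β`, the union of all
`g (F α)` is a countable union, so some `β ∈ A` has `g (F α) ⊆ h (F β)` for every `α ∈ A`, also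
for some `α > β`, against escape. -/
theorem exists_countable_forall_subset_of_forall_seq {P κ : Type*} [Countable κ]
    (g h : P → Set κ) (hgh : ∀ a : ℕ → P, ∃ k l, k < l ∧ g (a k) ⊆ h (a l)) :
    ∃ Q : Set P, Q.Countable ∧ ∀ p, ∃ q ∈ Q, g p ⊆ h q := by
  by_contra! hQ
  obtain ⟨F, hF⟩ := exists_omega_one_seq_forall_not_rel.{0} (fun p q => g p ⊆ h q) hQ
  obtain ⟨A, hAω, hAunc, hAbad⟩ := exists_not_countable_subset_forall_countable_not_rel
    (fun β α => g (F β) ⊆ h (F α)) not_countable_Iio_omega_one fun a _ => hgh (F ∘ a)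
  obtain ⟨C, hCA, hC, hgC⟩ := exists_countable_subset_forall_subset_biUnion (g ∘ F) A
  obtain ⟨β, hβA, hβ⟩ : (A \ ⋃ γ ∈ C, {β ∈ A | ¬g (F γ) ⊆ h (F β)}).Nonempty :=
    sdiff_nonempty.2 fun hsub => hAunc ((hC.biUnion fun γ hγ => hAbad γ (hCA hγ)).mono hsub)
  obtain ⟨α, hαA, hαβ⟩ : (A \ Iic β).Nonempty :=
    sdiff_nonempty.2 fun hsub => hAunc ((countable_Iic_of_lt_omega_one (hAω hβA)).mono hsub)
  refine hF (not_le.1 hαβ) (hAω hαA) ((hgC α hαA).trans (iUnion₂_subset fun γ hγ => ?_))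
  by_contra hγβ
  exact hβ (mem_biUnion hγ ⟨hβA, hγβ⟩)

theorem exists_forall_eventually_le_of_countable {ι : Type*} [Countable ι] (f : ι → ℕ → ℕ) :
    ∃ J : ℕ → ℕ, ∀ i, ∀ᶠ n in atTop, f i n ≤ J n := by
  rcases isEmpty_or_nonempty ι with hι | hι
  · exact ⟨0, isEmptyElim⟩
  obtain ⟨e, he⟩ := exists_surjective_nat ι
  refine ⟨fun n => ∑ k ∈ Finset.range (n + 1), f (e k) n, fun i => ?_⟩
  obtain ⟨k, rfl⟩ := he i
  filter_upwards [eventually_ge_atTop k] with n hn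
  exact Finset.single_le_sum (f := fun k => f (e k) n) (fun _ _ => Nat.zero_le _)
    (Finset.mem_range.2 (Nat.lt_succ_of_le hn))

theorem exists_diagonal_forall_eventually_le {S ι : Type*} [Preorder S] [Countable ι]
    (m : ℕ → ℕ → S) (hm : ∀ l, Monotone (m l)) (z : ι → S)
    (hz : ∀ q, ∀ᶠ l in atTop, ∃ j, z q ≤ m l j) :
    ∃ J : ℕ → ℕ, ∀ q, ∀ᶠ l in atTop, z q ≤ m l (J l) := by
  have hpick : ∀ q l, ∃ j, (∃ j', z q ≤ m l j') → z q ≤ m l j := fun q l => by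
    by_cases h : ∃ j', z q ≤ m l j'
    · exact h.imp fun _ hj _ => hj
    · exact ⟨0, fun h' => (h h').elim⟩
  choose f hf using hpick
  obtain ⟨J, hJ⟩ := exists_forall_eventually_le_of_countable f
  exact ⟨J, fun q => ((hz q).and (hJ q)).mono fun l ⟨hex, hle⟩ => (hf q l hex).trans (hm l hle)⟩

section Diagonal
variable {S : Type*} [CompletelyDistribLattice S]

theorem TotallyBelow.eventually_exists_le {m : ℕ → ℕ → S}
    (hrows : Monotone fun i => ⨆ j, m i j) {z : S} {i j : ℕ} (hz : TotallyBelow z (m i j)) :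
    ∀ᶠ l in atTop, ∃ j', z ≤ m l j' := by
  filter_upwards [eventually_ge_atTop i] with l hl
  exact hz.exists_le_of_le_iSup ((le_iSup (m i) j).trans (hrows hl))

theorem ConvergingLattice.exists_iSup_iSup_le_iSup_tailInf (hconv : ConvergingLattice S)
    (m : ℕ → ℕ → S) (hm : ∀ i, Monotone (m i)) (hrows : Monotone fun i => ⨆ j, m i j) :
    ∃ J : ℕ → ℕ, ⨆ i, ⨆ j, m i j ≤ ⨆ K, tailInf (fun l => m l (J l)) K := by
  let P := {p : S × S // TotallyBelow p.1 p.2 ∧ ∃ i j, TotallyBelow p.2 (m i j)}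
  -- `V y ⊆ V z` says that every entry of `m` above `z` is above `y`.
  let V : S → Set (ℕ × ℕ) := fun w => {ij | ¬w ≤ m ij.1 ij.2}
  obtain ⟨Q, hQ, hdom⟩ := exists_countable_forall_subset_of_forall_seq (fun p : P => V p.1.1)
    (fun p => V p.1.2) fun a => by
      obtain ⟨k, l, hkl, hle⟩ := hconv.exists_lt_le_of_totallyBelow (fun k => (a k).1.1)
        (fun k => (a k).1.2) fun k => (a k).2.1
      exact ⟨k, l, hkl, fun _ hij h => hij (hle.trans h)⟩
  have : Countable Q := hQ.to_subtype
  obtain ⟨J, hJ⟩ := exists_diagonal_forall_eventually_le m hm (fun q : Q => q.1.1.2) fun q => by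
    obtain ⟨i, j, hz⟩ := q.1.2.2
    exact hz.eventually_exists_le hrows
  refine ⟨J, iSup₂_le fun i j => (le_sSup_totallyBelow_totallyBelow (m i j)).trans
    (sSup_le fun y ⟨z, hyz, hz⟩ => ?_)⟩
  obtain ⟨q, hq, hyq⟩ := hdom ⟨(y, z), hyz, i, j, hz⟩
  obtain ⟨K, hK⟩ := (hJ ⟨q, hq⟩).exists_forall_of_atTop
  exact le_iSup_of_le K (le_iInf₂ fun l hl => not_not.1 fun h => hyq (a := (l, J l)) h (hK l hl))

theorem ConvergingLattice.seqClosed_limClosure (hconv : ConvergingLattice S) {X : Set S}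
    (hX : IsLowerSet X) : SeqClosed (limClosure X) := by
  intro s hs hc
  choose m hm hmX hmt using fun i =>
    exists_monotone_iSup_eq_of_mem_limClosure hX (hX.limClosure (tailInf_le s le_rfl) (hs i))
  obtain ⟨J, hJ⟩ := hconv.exists_iSup_iSup_le_iSup_tailInf m hm
    (by simpa only [hmt] using monotone_tailInf s)
  simp only [hmt] at hJ
  have he : ⨆ K, tailInf (fun l => m l (J l)) K = ⨆ i, s i :=
    le_antisymm (iSup_mono fun K => (tailInf_le _ le_rfl).trans
      ((le_iSup (m K) (J K)).trans ((hmt K).le.trans (tailInf_le s le_rfl)))) (hc ▸ hJ)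
  exact he ▸ (monotone_tailInf _).iSup_mem_limClosure fun K =>
    hX (tailInf_le _ le_rfl) (hmX K (J K))

end Diagonal

/-- In a converging lattice, the closure of a downward-closed set
`X` is expansive (`X ⊆ cl(X)`), idempotent (`cl(cl(X)) = cl(X)`), and yields a
downward-closed set (`↓cl(X) = cl(X)`). -/
theorem limClosure_expansive_idempotent_downClosed
    {S : Type*} [CompletelyDistribLattice S] (hconv : ConvergingLattice S)
    (X : Set S) (hX : ∀ ⦃s t : S⦄, s ≤ t → t ∈ X → s ∈ X) :
    X ⊆ limClosure X ∧
    limClosure (limClosure X) = limClosure X ∧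
    {s | ∃ t ∈ limClosure X, s ≤ t} = limClosure X := by
  replace hX : IsLowerSet X := fun _ _ h => hX h
  exact ⟨subset_limClosure X, (hconv.seqClosed_limClosure hX).limClosure_eq,
    hX.limClosure.lowerClosure⟩
end

section
/- Let (S, ≤) be a countable converging lattice and let G ⊆ S be downward closed and closed. Then there exists a finite set Q ⊆ G with ↓Q = G; in fact Q can be taken to be the set of maximal elements of G, which forms a finite antichain. -/
lemma converges_of_monotone {S : Type*} [CompleteLattice S] {s : ℕ → S}
    (hs : Monotone s) : Converges s := by
  have h : ∀ i, (⨅ j, ⨅ (_ : i ≤ j), s j) = s i := fun i =>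
    le_antisymm (iInf₂_le i le_rfl) (le_iInf₂ fun _ hij => hs hij)
  simp only [Converges, h]

lemma IsChain.sup_mem {α : Type*} [SemilatticeSup α] {c : Set α} (hc : IsChain (· ≤ ·) c)
    {x y : α} (hx : x ∈ c) (hy : y ∈ c) : x ⊔ y ∈ c := by
  rcases hc.total hx hy with hxy | hyx
  · rwa [sup_eq_right.2 hxy]
  · rwa [sup_eq_left.2 hyx]

namespace SeqClosed

variable {S : Type*} [CompleteLattice S] {G : Set S}

lemma iSup_mem_of_isChain (hG : SeqClosed G) {f : ℕ → S} (hfG : ∀ n, f n ∈ G)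
    (hf : IsChain (· ≤ ·) (Set.range f)) : (⨆ n, f n) ∈ G := by
  have hmem : ∀ n, partialSups f n ∈ Set.range f := fun n =>
    Finset.sup'_mem _ (fun _ hx _ hy => hf.sup_mem hx hy) _ Finset.nonempty_Iic f
      fun i _ => Set.mem_range_self i
  rw [← iSup_partialSups_eq]
  refine hG _ (fun n => ?_) (converges_of_monotone (partialSups_monotone f))
  obtain ⟨i, hi⟩ := hmem n
  exact hi ▸ hfG i

lemma exists_le_maximal [Countable S] (hG : SeqClosed G) {x : S} (hx : x ∈ G) :
    ∃ m, x ≤ m ∧ Maximal (· ∈ G) m := by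
  refine zorn_le_nonempty₀ G (fun c hcG hc y hy => ?_) x hx
  obtain ⟨f, rfl⟩ := c.to_countable.exists_eq_range ⟨y, hy⟩
  exact ⟨_, hG.iSup_mem_of_isChain (fun n => hcG (Set.mem_range_self n)) hc,
    Set.forall_mem_range.2 (le_iSup f)⟩

end SeqClosed

lemma ConvergingLattice.finite_setOf_maximal {S : Type*} [CompletelyDistribLattice S]
    (hconv : ConvergingLattice S) {G : Set S} (hG : SeqClosed G) :
    {m | Maximal (· ∈ G) m}.Finite := by
  by_contra hinf
  let e := Set.Infinite.natEmbedding _ hinf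
  obtain ⟨φ, hφ, hconvφ⟩ := hconv fun n => (e n : S)
  have hsup : (⨆ i, (e (φ i) : S)) ∈ G := hG _ (fun i => (e (φ i)).2.prop) hconvφ
  have heq : ∀ i, (e (φ i) : S) = ⨆ j, (e (φ j) : S) := fun i =>
    (e (φ i)).2.eq_of_le hsup (le_iSup (fun j => (e (φ j) : S)) i)
  exact (hφ Nat.zero_lt_one).ne (e.injective (Subtype.ext ((heq 0).trans (heq 1).symm)))

/-- In a countable converging lattice, every set `G` that is both
downward closed and closed is the downward closure of a finite subset; in fact the
set of maximal elements of `G` works, and it is a finite antichain. -/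
theorem closed_downClosed_finitely_represented
    {S : Type*} [CompletelyDistribLattice S] [Countable S]
    (hconv : ConvergingLattice S)
    (G : Set S) (hdc : ∀ ⦃s t : S⦄, s ≤ t → t ∈ G → s ∈ G) (hG : SeqClosed G) :
    ∃ Q : Set S, Q ⊆ G ∧ Q.Finite ∧ {s | ∃ q ∈ Q, s ≤ q} = G ∧
      Q = {g ∈ G | ∀ g' ∈ G, g ≤ g' → g = g'} ∧
      ∀ a ∈ Q, ∀ b ∈ Q, a ≤ b → a = b := by
  refine ⟨{m | Maximal (· ∈ G) m}, fun _ hm => hm.prop, hconv.finite_setOf_maximal hG,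
    ?_, Set.ext fun _ => maximal_iff, fun _ ha _ hb => (setOfPred_maximal_antichain _).eq ha hb⟩
  ext x
  refine ⟨fun ⟨_, hq, hxq⟩ => hdc hxq hq.prop, fun hx => ?_⟩
  obtain ⟨m, hxm, hm⟩ := hG.exists_le_maximal hx
  exact ⟨m, hm, hxm⟩
end

section
/- Let U be a finitely branching WSTS over a finite alphabet Σ, i.e., the set of initial states and every set δ(s,a) are finite. Then there exists a deterministic WSTS V over Σ with L(V) = L(U). -/
/-- A ULTS is finitely branching if the set of initial states and every transition
image are finite. -/
def ULTS.FinitelyBranching {A : Type} (U : ULTS A) : Prop :=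
  U.init.Finite ∧ ∀ s a, (U.tr s a).Finite


/-!
The subset construction works for WSTS as long as only finite sets of states arise, which is
guaranteed by finite branching. A finite set of states is ordered by domination
(`P ≤ Q` iff every state of `P` lies below some state of `Q`); this order is a simulation
because the original order is, and it is a well quasi order by Higman's lemma, since a finite
set is the set of entries of a list and sublist embedding of lists implies domination.
-/

theorem List.SublistForall₂.exists_rel_of_mem {α β : Type*} {R : α → β → Prop}
    {l₁ : List α} {l₂ : List β} (h : List.SublistForall₂ R l₁ l₂) {a : α} (ha : a ∈ l₁) :
    ∃ b ∈ l₂, R a b := by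
  induction h with
  | nil => simp at ha
  | @cons a₁ a₂ _ _ hr _ ih =>
    rcases List.mem_cons.mp ha with rfl | ha
    · exact ⟨a₂, List.mem_cons_self, hr⟩
    · obtain ⟨b, hb, hab⟩ := ih ha
      exact ⟨b, List.mem_cons_of_mem _ hb, hab⟩
  | cons_right _ ih =>
    obtain ⟨b, hb, hab⟩ := ih ha
    exact ⟨b, List.mem_cons_of_mem _ hb, hab⟩

theorem WellQuasiOrdered.sublistForall₂ {α : Type*} {r : α → α → Prop} [IsPreorder α r]
    (h : WellQuasiOrdered r) : WellQuasiOrdered (List.SublistForall₂ r) := by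
  rw [← Set.partiallyWellOrderedOn_univ_iff]
  simpa using (Set.partiallyWellOrderedOn_univ_iff.mpr h).partiallyWellOrderedOn_sublistForall₂ r

theorem WellQuasiOrdered.finiteSubsets {α : Type*} {r : α → α → Prop} [IsPreorder α r]
    (h : WellQuasiOrdered r) :
    WellQuasiOrdered fun s t : {s : Set α // s.Finite} => ∀ x ∈ s.1, ∃ y ∈ t.1, r x y := by
  refine h.sublistForall₂.of_surjective
    ⟨fun l => ⟨{x | x ∈ l}, l.finite_toSet⟩, fun hl _ hx => hl.exists_rel_of_mem hx⟩ ?_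
  rintro ⟨s, hs⟩
  exact ⟨hs.toFinset.toList, Subtype.ext (by ext; simp)⟩

namespace ULTS

variable {A : Type} (U : ULTS A)

instance isPreorder : IsPreorder U.S U.le where
  refl := U.le_refl
  trans _ _ _ hst htu := U.le_trans hst htu

variable {U}

theorem mem_stepSet {P : Set U.S} {a : A} {s' : U.S} :
    s' ∈ U.stepSet P a ↔ ∃ s ∈ P, s' ∈ U.tr s a := by
  simp [stepSet]

theorem stepSet_singleton (s : U.S) (a : A) : U.stepSet {s} a = U.tr s a :=
  Set.biUnion_singleton s _

theorem stepSet_finite (htr : ∀ s a, (U.tr s a).Finite) {P : Set U.S} (hP : P.Finite) (a : A) :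
    (U.stepSet P a).Finite :=
  hP.biUnion fun s _ => htr s a

theorem reachSet_finite (htr : ∀ s a, (U.tr s a).Finite) (w : List A) {P : Set U.S}
    (hP : P.Finite) : (U.reachSet P w).Finite := by
  induction w generalizing P with
  | nil => exact hP
  | cons a w ih => exact ih (stepSet_finite htr hP a)

variable (U)

def determinize (hfb : U.FinitelyBranching) : ULTS A where
  S := {P : Set U.S // P.Finite}
  le P Q := ∀ s ∈ P.1, ∃ t ∈ Q.1, U.le s t
  le_refl P s hs := ⟨s, hs, U.le_refl s⟩
  le_trans P Q R hPQ hQR s hs := by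
    obtain ⟨t, ht, hst⟩ := hPQ s hs
    obtain ⟨u, hu, htu⟩ := hQR t ht
    exact ⟨u, hu, U.le_trans hst htu⟩
  init := {⟨U.init, hfb.1⟩}
  tr P a := {⟨U.stepSet P.1 a, stepSet_finite hfb.2 P.2 a⟩}
  final := {P | (P.1 ∩ U.final).Nonempty}
  final_up := by
    rintro P Q ⟨s, hsP, hsF⟩ hPQ
    obtain ⟨t, htQ, hst⟩ := hPQ s hsP
    exact ⟨t, htQ, U.final_up hsF hst⟩
  sim := by
    rintro P Q a P' hPQ rfl
    refine ⟨_, rfl, fun s' hs' => ?_⟩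
    obtain ⟨s, hsP, hs's⟩ := mem_stepSet.mp hs'
    obtain ⟨t, htQ, hst⟩ := hPQ s hsP
    obtain ⟨t', ht't, hs't'⟩ := U.sim a hst hs's
    exact ⟨t', mem_stepSet.mpr ⟨t, htQ, ht't⟩, hs't'⟩

variable (hfb : U.FinitelyBranching)

theorem determinize_deterministic : (U.determinize hfb).Deterministic :=
  ⟨⟨_, rfl⟩, fun _ _ => ⟨_, rfl⟩⟩

theorem isWQO_determinize (hwqo : U.IsWQO) : (U.determinize hfb).IsWQO :=
  WellQuasiOrdered.finiteSubsets (r := U.le) hwqo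

theorem reachSet_determinize (w : List A) (P : (U.determinize hfb).S) :
    (U.determinize hfb).reachSet {P} w = {⟨U.reachSet P.1 w, reachSet_finite hfb.2 w P.2⟩} := by
  induction w generalizing P with
  | nil => rfl
  | cons a w ih => exact (congrArg (reachSet _ · w) (stepSet_singleton P a)).trans (ih _)

theorem lang_determinize : (U.determinize hfb).lang = U.lang := by
  ext w
  have h : (U.determinize hfb).reachSet (U.determinize hfb).init w = _ :=
    U.reachSet_determinize hfb w ⟨U.init, hfb.1⟩
  simp only [lang, Set.mem_ofPred_eq, h]
  exact Set.singleton_inter_nonempty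

end ULTS

theorem finitelyBranching_wsts_determinizable_general {A : Type}
    (U : ULTS A) (hwqo : U.IsWQO) (hfb : U.FinitelyBranching) :
    ∃ V : ULTS A, V.IsWQO ∧ V.Deterministic ∧ V.lang = U.lang :=
  ⟨U.determinize hfb, U.isWQO_determinize hfb hwqo, U.determinize_deterministic hfb,
    U.lang_determinize hfb⟩

/-- Every finitely branching WSTS can be determinized: its
language is accepted by a deterministic WSTS. -/
theorem finitelyBranching_wsts_determinizable {A : Type} [Finite A]
    (U : ULTS A) (hwqo : U.IsWQO) (hfb : U.FinitelyBranching) :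
    ∃ V : ULTS A, V.IsWQO ∧ V.Deterministic ∧ V.lang = U.lang :=
  finitelyBranching_wsts_determinizable_general U hwqo hfb
end
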